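/- Let T(Γ,ρ;Υ) be a generalized truncation and let g ∈ Aut(Γ). Then g lifts to an automorphism of T(Γ,ρ;Υ) if and only if for every vertex u ∈ V(Γ) and every pair of neighbors w, x of u in Γ: v_{ρ(u,x)} is adjacent to v_{ρ(u,w)} in Υ if and only if v_{ρ(u^g,x^g)} is adjacent to v_{ρ(u^g,w^g)} in Υ. -/

import Mathlib

open SimpleGraph

variable {V W : Type*}

/-- The generalized truncation `T(Γ,ρ;Υ)` of a graph `Γ` by a graph `Υ`,
with respect to a labeling `ρ` of the darts of `Γ` by vertices of `Υ`. -/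
def trunc (Γ : SimpleGraph V) (Υ : SimpleGraph W)
    (ρ : ∀ u w : V, Γ.Adj u w → W) : SimpleGraph (V × W) where
  Adj x y := (x.1 = y.1 ∧ Υ.Adj x.2 y.2) ∨
    (∃ h : Γ.Adj x.1 y.1, x.2 = ρ x.1 y.1 h ∧ y.2 = ρ y.1 x.1 h.symm)
  symm := ⟨by
    rintro ⟨u, i⟩ ⟨w, j⟩ (⟨h1, h2⟩ | ⟨h, h1, h2⟩)
    · exact Or.inl ⟨h1.symm, h2.symm⟩
    · exact Or.inr ⟨h.symm, h2, h1⟩⟩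
  loopless := ⟨by
    rintro ⟨u, i⟩ (⟨_, h⟩ | ⟨h, _⟩)
    · exact Υ.loopless.irrefl _ h
    · exact Γ.loopless.irrefl _ h⟩

/-- `ρ` is a vertex-neighborhood labeling of `Γ`: for every vertex `u`, the restriction
of `ρ` to the darts emanating from `u` is a bijection onto the vertex set of `Υ`. -/
def IsVNLabeling (Γ : SimpleGraph V) (ρ : ∀ u w : V, Γ.Adj u w → W) : Prop :=
  ∀ u : V, ∀ i : W, ∃! w : V, ∃ h : Γ.Adj u w, ρ u w h = i

/-- A permutation of the vertices is an automorphism of the graph. -/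
def IsAut (Γ : SimpleGraph V) (π : Equiv.Perm V) : Prop :=
  ∀ a b : V, Γ.Adj (π a) (π b) ↔ Γ.Adj a b

/-- The automorphism group of a graph, as a subgroup of the symmetric group. -/
def autG (Γ : SimpleGraph V) : Subgroup (Equiv.Perm V) where
  carrier := {π | IsAut Γ π}
  one_mem' := by intro a b; rfl
  mul_mem' := by
    intro f g hf hg a b
    exact (hf (g a) (g b)).trans (hg a b)
  inv_mem' := by
    intro f hf a b
    conv_rhs => rw [← Equiv.apply_symm_apply f a, ← Equiv.apply_symm_apply f b]
    exact (hf _ _).symm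

/-- An automorphism `g` of `Γ` lifts to an automorphism of the generalized truncation
`T(Γ,ρ;Υ)` if some automorphism of `T(Γ,ρ;Υ)` maps each part `V(Γ̃_u)` of the natural
partition onto the part `V(Γ̃_{u^g})`. -/
def Lifts {V W : Type*} (Γ : SimpleGraph V) (Υ : SimpleGraph W)
    (ρ : ∀ u w : V, Γ.Adj u w → W) (g : Equiv.Perm V) : Prop :=
  ∃ gt : Equiv.Perm (V × W), IsAut (trunc Γ Υ ρ) gt ∧
    ∀ (u : V) (i : W), (gt (u, i)).1 = g u

/-! The labeling `ρ` identifies the neighbourhood of every vertex `u` with `W`, so an automorphism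
`g` of `Γ` induces a permutation `σᵤ` of `W` carrying the label of `u → w` to the label of
`g u → g w`. The map `(u, i) ↦ (g u, σᵤ i)` is then the only candidate for a lift of `g`: blue edges
force it, since a lift sends the blue edge at the dart `u → w` to a blue edge leaving the part of
`g u`, which must be the one at `g u → g w`. It always preserves blue edges, and it preserves red
edges exactly when every `σᵤ` is an automorphism of `Υ`. -/

section Truncation

variable {Γ : SimpleGraph V} {Υ : SimpleGraph W} {ρ : ∀ u w : V, Γ.Adj u w → W}

lemma trunc_adj_mk_self_iff {u : V} {i j : W} : (trunc Γ Υ ρ).Adj (u, i) (u, j) ↔ Υ.Adj i j := by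
  refine ⟨?_, fun h => Or.inl ⟨rfl, h⟩⟩
  rintro (⟨-, h⟩ | ⟨h, -⟩)
  · exact h
  · exact absurd h (Γ.loopless.irrefl u)

lemma trunc_adj_mk_iff_of_ne {u w : V} {i j : W} (huw : u ≠ w) :
    (trunc Γ Υ ρ).Adj (u, i) (w, j) ↔ ∃ h : Γ.Adj u w, i = ρ u w h ∧ j = ρ w u h.symm := by
  refine ⟨?_, Or.inr⟩
  rintro (⟨h, -⟩ | h)
  · exact absurd h huw
  · exact h

lemma snd_apply_label_of_isAut_trunc {gt : Equiv.Perm (V × W)} {g : V → V}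
    (hgt : IsAut (trunc Γ Υ ρ) gt) (hfst : ∀ u i, (gt (u, i)).1 = g u)
    {u w : V} (h : Γ.Adj u w) (h' : Γ.Adj (g u) (g w)) :
    (gt (u, ρ u w h)).2 = ρ (g u) (g w) h' := by
  have hadj := (hgt (u, ρ u w h) (w, ρ w u h.symm)).2 (Or.inr ⟨h, rfl, rfl⟩)
  rw [← Prod.mk.eta (p := gt (u, _)), ← Prod.mk.eta (p := gt (w, _)), hfst, hfst,
    trunc_adj_mk_iff_of_ne h'.ne] at hadj
  exact hadj.choose_spec.1

end Truncation

def IsAut.toIso {Γ : SimpleGraph V} {g : Equiv.Perm V} (hg : IsAut Γ g) : Γ ≃g Γ :=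
  ⟨g, hg _ _⟩

namespace IsVNLabeling

variable {Γ : SimpleGraph V} {ρ : ∀ u w : V, Γ.Adj u w → W} (hρ : IsVNLabeling Γ ρ)
  {g : Equiv.Perm V} (hg : IsAut Γ g)

noncomputable def equivNeighborSet (u : V) : Γ.neighborSet u ≃ W :=
  Equiv.ofBijective (fun w => ρ u w w.2)
    ⟨fun w x e => Subtype.ext ((hρ u _).unique ⟨w.2, e⟩ ⟨x.2, rfl⟩),
      fun i => ⟨⟨_, (hρ u i).exists.choose_spec.1⟩, (hρ u i).exists.choose_spec.2⟩⟩

lemma equivNeighborSet_symm_apply {u w : V} (h : Γ.Adj u w) :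
    (hρ.equivNeighborSet u).symm (ρ u w h) = ⟨w, h⟩ :=
  (Equiv.symm_apply_eq _).2 rfl

noncomputable def localPerm (u : V) : Equiv.Perm W :=
  (hρ.equivNeighborSet u).symm.trans
    ((hg.toIso.mapNeighborSet u).trans (hρ.equivNeighborSet (g u)))

lemma localPerm_label {u w : V} (h : Γ.Adj u w) :
    hρ.localPerm hg u (ρ u w h) = ρ (g u) (g w) ((hg u w).mpr h) := by
  simp only [localPerm, Equiv.trans_apply, equivNeighborSet_symm_apply]
  rfl

lemma localPerm_eq_label_iff {u w : V} (h : Γ.Adj u w) {i : W} :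
    hρ.localPerm hg u i = ρ (g u) (g w) ((hg u w).mpr h) ↔ i = ρ u w h := by
  rw [← localPerm_label hρ hg h, Equiv.apply_eq_iff_eq]

noncomputable def liftPerm : Equiv.Perm (V × W) :=
  Equiv.prodShear g (hρ.localPerm hg)

lemma liftPerm_apply (p : V × W) : hρ.liftPerm hg p = (g p.1, hρ.localPerm hg p.1 p.2) :=
  rfl

lemma lifts_iff_isAut_liftPerm {Υ : SimpleGraph W} :
    Lifts Γ Υ ρ g ↔ IsAut (trunc Γ Υ ρ) (hρ.liftPerm hg) := by
  refine ⟨?_, fun h => ⟨_, h, fun _ _ => rfl⟩⟩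
  rintro ⟨gt, hgt, hfst⟩
  suffices gt = hρ.liftPerm hg from this ▸ hgt
  refine Equiv.ext fun ⟨u, i⟩ => Prod.ext (hfst u i) ?_
  obtain ⟨w, h, rfl⟩ := (hρ u i).exists
  rw [snd_apply_label_of_isAut_trunc hgt hfst h ((hg u w).mpr h), liftPerm_apply,
    localPerm_label]

lemma isAut_trunc_liftPerm_iff {Υ : SimpleGraph W} :
    IsAut (trunc Γ Υ ρ) (hρ.liftPerm hg) ↔ ∀ u, IsAut Υ (hρ.localPerm hg u) := by
  constructor
  · intro h u i j
    simpa only [liftPerm_apply, trunc_adj_mk_self_iff] using h (u, i) (u, j)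
  rintro hσ ⟨u, i⟩ ⟨w, j⟩
  simp only [liftPerm_apply]
  obtain rfl | huw := eq_or_ne u w
  · rw [trunc_adj_mk_self_iff, trunc_adj_mk_self_iff]
    exact hσ u i j
  rw [trunc_adj_mk_iff_of_ne (g.injective.ne huw), trunc_adj_mk_iff_of_ne huw]
  constructor
  · rintro ⟨h, hi, hj⟩
    have h' := (hg u w).mp h
    exact ⟨h', (hρ.localPerm_eq_label_iff hg h').1 hi, (hρ.localPerm_eq_label_iff hg h'.symm).1 hj⟩
  · rintro ⟨h, hi, hj⟩
    exact ⟨(hg u w).mpr h, (hρ.localPerm_eq_label_iff hg h).2 hi,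
      (hρ.localPerm_eq_label_iff hg h.symm).2 hj⟩

lemma isAut_localPerm_iff {Υ : SimpleGraph W} (u : V) :
    IsAut Υ (hρ.localPerm hg u) ↔
      ∀ (w x : V) (hw : Γ.Adj u w) (hx : Γ.Adj u x),
        (Υ.Adj (ρ u x hx) (ρ u w hw) ↔
          Υ.Adj (ρ (g u) (g x) ((hg u x).mpr hx)) (ρ (g u) (g w) ((hg u w).mpr hw))) := by
  constructor
  · intro hσ w x hw hx
    rw [← localPerm_label hρ hg hx, ← localPerm_label hρ hg hw]
    exact (hσ _ _).symm
  · intro H i j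
    obtain ⟨x, hx, rfl⟩ := (hρ u i).exists
    obtain ⟨w, hw, rfl⟩ := (hρ u j).exists
    rw [localPerm_label, localPerm_label]
    exact (H w x hw hx).symm

end IsVNLabeling

theorem stmt5_general {V W : Type*} (Γ : SimpleGraph V) (Υ : SimpleGraph W)
    (ρ : ∀ u w : V, Γ.Adj u w → W) (hρ : IsVNLabeling Γ ρ)
    (g : Equiv.Perm V) (hg : IsAut Γ g) :
    Lifts Γ Υ ρ g ↔
      ∀ (u w x : V) (hw : Γ.Adj u w) (hx : Γ.Adj u x),
        (Υ.Adj (ρ u x hx) (ρ u w hw) ↔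
          Υ.Adj (ρ (g u) (g x) ((hg u x).mpr hx)) (ρ (g u) (g w) ((hg u w).mpr hw))) := by
  rw [hρ.lifts_iff_isAut_liftPerm hg, hρ.isAut_trunc_liftPerm_iff hg]
  exact forall_congr' (hρ.isAut_localPerm_iff hg)

/-- An automorphism `g` of `Γ` lifts to an automorphism of the
generalized truncation `T(Γ,ρ;Υ)` if and only if for every vertex `u` and every pair of
its neighbors `w`, `x`: `v_{ρ(u,x)} ∼ v_{ρ(u,w)}` in `Υ` iff
`v_{ρ(u^g,x^g)} ∼ v_{ρ(u^g,w^g)}` in `Υ`. -/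
theorem stmt5 {V W : Type*} [Fintype V] [Fintype W] [DecidableEq V] [DecidableEq W]
    {k : ℕ} (Γ : SimpleGraph V) [DecidableRel Γ.Adj] (Υ : SimpleGraph W)
    (hreg : Γ.IsRegularOfDegree k) (hcard : Fintype.card W = k)
    (ρ : ∀ u w : V, Γ.Adj u w → W) (hρ : IsVNLabeling Γ ρ)
    (g : Equiv.Perm V) (hg : IsAut Γ g) :
    Lifts Γ Υ ρ g ↔
      ∀ (u w x : V) (hw : Γ.Adj u w) (hx : Γ.Adj u x),
        (Υ.Adj (ρ u x hx) (ρ u w hw) ↔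
          Υ.Adj (ρ (g u) (g x) ((hg u x).mpr hx)) (ρ (g u) (g w) ((hg u w).mpr hw))) :=
  stmt5_general Γ Υ ρ hρ g hg
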